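/- Let ℓ be differentiable, convex, L-Lipschitz (so ‖∇ℓ(w)‖ ≤ L), satisfy the interpolation condition ℓ(w*) ≤ ℓ(w) for all w, and the order-1 strong convexity bound −⟨∇ℓ(w), w − w*⟩ ≤ ℓ(w*) − ℓ(w) − (μ/2)‖w − w*‖. Then for the update w' = w − η·c₁‖w − w*‖·∇ℓ(w), we have ‖w' − w*‖² ≤ (1 − μηc₁ + η²c₁²L²)‖w − w*‖². -/

import Mathlib

/-!
Expanding the square, `‖(w - w*) - t g‖² = ‖w - w*‖² - 2t⟪g, w - w*⟫ + t²‖g‖²` with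
`t = η c₁ ‖w - w*‖`. Interpolation turns the order-1 strong convexity bound into
`⟪g, w - w*⟫ ≥ (μ/2)‖w - w*‖`, and the Lipschitz bound gives `‖g‖ ≤ L`; since `t` is proportional
to `‖w - w*‖`, both error terms are multiples of `‖w - w*‖²`.
-/

open scoped RealInnerProductSpace

theorem norm_sub_smul_sq_le {E : Type*} [NormedAddCommGroup E] [InnerProductSpace ℝ E]
    {d g : E} {t a L : ℝ} (ht : 0 ≤ t) (ha : a ≤ ⟪g, d⟫) (hg : ‖g‖ ≤ L) :
    ‖d - t • g‖ ^ 2 ≤ ‖d‖ ^ 2 - 2 * t * a + t ^ 2 * L ^ 2 := by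
  have hinner : t * a ≤ t * ⟪g, d⟫ := mul_le_mul_of_nonneg_left ha ht
  have hsq : ‖g‖ ^ 2 ≤ L ^ 2 := pow_le_pow_left₀ (norm_nonneg g) hg 2
  have hsq' : t ^ 2 * ‖g‖ ^ 2 ≤ t ^ 2 * L ^ 2 := mul_le_mul_of_nonneg_left hsq (sq_nonneg t)
  rw [norm_sub_sq_real, real_inner_smul_right, norm_smul, Real.norm_of_nonneg ht, mul_pow,
    real_inner_comm]
  linarith

theorem one_step_contraction_general {n : ℕ} (ℓ : EuclideanSpace ℝ (Fin n) → ℝ)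
    (L μ η c₁ : ℝ) (hη : 0 < η) (hc₁ : 0 < c₁)
    (w wstar : EuclideanSpace ℝ (Fin n))
    (hLip : ∀ v, ‖gradient ℓ v‖ ≤ L)
    (hinterp : ∀ v, ℓ wstar ≤ ℓ v)
    (hsc : -⟪gradient ℓ w, w - wstar⟫ ≤ ℓ wstar - ℓ w - (μ / 2) * ‖w - wstar‖) :
    ‖(w - (η * (c₁ * ‖w - wstar‖)) • gradient ℓ w) - wstar‖ ^ 2 ≤
      (1 - μ * η * c₁ + η ^ 2 * c₁ ^ 2 * L ^ 2) * ‖w - wstar‖ ^ 2 := by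
  have hstep : 0 ≤ η * (c₁ * ‖w - wstar‖) := by positivity
  have hcorr : μ / 2 * ‖w - wstar‖ ≤ ⟪gradient ℓ w, w - wstar⟫ := by linarith [hinterp w]
  calc ‖(w - (η * (c₁ * ‖w - wstar‖)) • gradient ℓ w) - wstar‖ ^ 2
      = ‖(w - wstar) - (η * (c₁ * ‖w - wstar‖)) • gradient ℓ w‖ ^ 2 := by rw [sub_right_comm]
    _ ≤ ‖w - wstar‖ ^ 2 - 2 * (η * (c₁ * ‖w - wstar‖)) * (μ / 2 * ‖w - wstar‖)
          + (η * (c₁ * ‖w - wstar‖)) ^ 2 * L ^ 2 := norm_sub_smul_sq_le hstep hcorr (hLip w)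
    _ = (1 - μ * η * c₁ + η ^ 2 * c₁ ^ 2 * L ^ 2) * ‖w - wstar‖ ^ 2 := by ring

theorem one_step_contraction {n : ℕ} (ℓ : EuclideanSpace ℝ (Fin n) → ℝ)
    (hdiff : Differentiable ℝ ℓ) (hconv : ConvexOn ℝ Set.univ ℓ)
    (L μ η c₁ : ℝ) (hL : 0 < L) (hμ : 0 ≤ μ) (hη : 0 < η) (hc₁ : 0 < c₁)
    (w wstar : EuclideanSpace ℝ (Fin n))
    (hLip : ∀ v, ‖gradient ℓ v‖ ≤ L)
    (hinterp : ∀ v, ℓ wstar ≤ ℓ v)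
    (hsc : -⟪gradient ℓ w, w - wstar⟫ ≤ ℓ wstar - ℓ w - (μ / 2) * ‖w - wstar‖) :
    ‖(w - (η * (c₁ * ‖w - wstar‖)) • gradient ℓ w) - wstar‖ ^ 2 ≤
      (1 - μ * η * c₁ + η ^ 2 * c₁ ^ 2 * L ^ 2) * ‖w - wstar‖ ^ 2 :=
  one_step_contraction_general ℓ L μ η c₁ hη hc₁ w wstar hLip hinterp hsc
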